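/- arXiv:math/9205202 — 6 statements merged into one kernel-verified Lean document; each statement's English description precedes it below -/
import Mathlib

section
/- For every natural number m, C₂(m + 4) ≥ ack 4 m + 3 (in the paper's notation, C̃₂(m+4) ≥ F₄(m) + 3). -/
def C0 (m : ℕ) : ℕ := 2 ^ m
def C1 (m : ℕ) : ℕ := 2 ^ m

def C2 : ℕ → ℕ
  | 0 => 0
  | m + 1 => C2 m + 2 ^ (C2 m)

def C3 (m : ℕ) : ℕ := 2 ^ m

def C4 : ℕ → ℕ
  | 0 => 0
  | 1 => 8
  | m + 2 => C4 (m + 1) + C1 (C2 (C3 (C4 (m + 1)))) - 1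

def C5 : ℕ → ℕ
  | 0 => 0
  | 1 => 2
  | m + 2 => C5 (m + 1) + C3 (C4 (C5 (m + 1)))

def C6 (m : ℕ) : ℕ := 2 ^ m

def C7 : ℕ → ℕ
  | 0 => 0
  | m + 1 => C7 m + C1 (C2 (C3 (C4 (C5 (C6 (C7 m)))))) - 8

def C8 (m : ℕ) : ℕ := 2 ^ m

def H (n : ℕ) : ℕ := C1 (C2 (C3 (C4 (C5 n))))
def G (n : ℕ) : ℕ := C1 (C2 (C3 (C4 (C5 (C6 (C7 (C8 n)))))))

def C9 : ℕ → ℕ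
  | 0 => 0
  | 1 => G (H 1 - 8) - 8
  | m + 2 => C9 (m + 1) + G (C9 (m + 1)) - H 1

def C10 : ℕ → ℕ
  | 0 => 0
  | m + 1 => C10 m + C3 (C4 (C5 (C6 (C7 (C8 (C9 (C10 m)))))))

theorem stmt_0 : ∀ m : ℕ, C2 (m + 4) ≥ ack 4 m + 3 := by
  intro m
  induction m with
  | zero =>
    have h : ack 4 0 = 13 := by rw [ack_succ_zero, ack_three]; norm_num
    have h2 : C2 (0 + 4) = 2059 := by norm_num [C2]
    omega
  | succ n ih =>
    have h1 : C2 (n + 1 + 4) = C2 (n + 4) + 2 ^ (C2 (n + 4)) := rfl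
    have h2 : ack 4 (n + 1) = 2 ^ (ack 4 n + 3) - 3 := by
      rw [ack_succ_succ, ack_three]
    have h3 : (3:ℕ) ≤ 2 ^ (ack 4 n + 3) := by
      calc (3:ℕ) ≤ 2 ^ 3 := by norm_num
      _ ≤ 2 ^ (ack 4 n + 3) := Nat.pow_le_pow_right (by norm_num) (by omega)
    have h4 : 2 ^ (ack 4 n + 3) ≤ 2 ^ (C2 (n + 4)) := Nat.pow_le_pow_right (by norm_num) ih
    omega
end

section
/- For every natural number m, C₂(m + 4) ≥ ack 4 m + 4 (the 'trivial improvement' of the growth estimate F₄(m−4) for column 2 in Table 1). -/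
theorem stmt_1 : ∀ m : ℕ, C2 (m + 4) ≥ ack 4 m + 4 := by
  intro m
  induction m with
  | zero => norm_num [C2, ack]
  | succ n ih =>
    have h4 : ack 4 (n + 1) = 2 ^ (ack 4 n + 3) - 3 := by
      rw [ack_succ_succ, ack_three]
    rw [show n + 1 + 4 = (n + 4) + 1 from rfl, C2]
    have h2 : 2 ^ (C2 (n + 4)) ≥ 2 ^ (ack 4 n + 4) :=
      Nat.pow_le_pow_right (by norm_num) ih
    have h3 : (2 : ℕ) ^ (ack 4 n + 4) = 2 * 2 ^ (ack 4 n + 3) := by ring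
    have hp : (1 : ℕ) ≤ 2 ^ (ack 4 n + 3) := Nat.one_le_two_pow
    omega
end

section
/- For every natural number m, C₇(m + 2) ≥ ack 7 m + 4 (the growth estimate F₇(m−2) for column 7 in Table 1, with the trivial improvement +4). -/
/- ## equation lemmas -/
lemma C2_succ (t : ℕ) : C2 (t+1) = C2 t + 2 ^ C2 t := rfl
lemma C4_succ2 (t : ℕ) : C4 (t+2) = C4 (t+1) + C1 (C2 (C3 (C4 (t+1)))) - 1 := rfl
lemma C5_succ2 (t : ℕ) : C5 (t+2) = C5 (t+1) + C3 (C4 (C5 (t+1))) := rfl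
lemma C4_one : C4 1 = 8 := rfl
lemma C5_one : C5 1 = 2 := rfl
lemma C7_succ (m : ℕ) : C7 (m + 1) = C7 m + C1 (C2 (C3 (C4 (C5 (C6 (C7 m)))))) - 8 := rfl
lemma C1_eq : ∀ x, C1 x = 2 ^ x := fun _ => rfl
lemma C3_eq : ∀ x, C3 x = 2 ^ x := fun _ => rfl

/- ## ack lemmas -/
lemma ack4_zero : ack 4 0 = 13 := by
  show ack (3+1) 0 = 13
  rw [ack_succ_zero, ack_three]
  norm_num

lemma ack4_succ (k : ℕ) : ack 4 (k+1) = ack 3 (ack 4 k) := ack_succ_succ 3 k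
lemma ack5_succ (k : ℕ) : ack 5 (k+1) = ack 4 (ack 5 k) := ack_succ_succ 4 k
lemma ack6_succ (k : ℕ) : ack 6 (k+1) = ack 5 (ack 6 k) := ack_succ_succ 5 k
lemma ack7_succ (k : ℕ) : ack 7 (k+1) = ack 6 (ack 7 k) := ack_succ_succ 6 k
lemma ack6_zero : ack 6 0 = ack 5 1 := ack_succ_zero 5
lemma ack7_zero : ack 7 0 = ack 6 1 := ack_succ_zero 6

lemma ack5_zero : ack 5 0 = 65533 := by
  have h : ack 5 0 = ack 4 1 := ack_succ_zero 4
  rw [h, show (1:ℕ) = 0 + 1 from rfl, ack4_succ, ack4_zero, ack_three]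
  norm_num

lemma ack3_add3 (a : ℕ) : ack 3 a + 3 = 2 ^ (a + 3) := by
  rw [ack_three]
  have h : (8:ℕ) ≤ 2 ^ (a+3) := by
    calc (8:ℕ) = 2 ^ 3 := by norm_num
    _ ≤ 2 ^ (a+3) := Nat.pow_le_pow_right (by norm_num) (by omega)
  omega

/- ## elementary 2^ lemmas -/
lemma pow2_mono {a b : ℕ} (h : a ≤ b) : 2 ^ a ≤ 2 ^ b :=
  Nat.pow_le_pow_right (by norm_num) h

lemma two_pow_ge (t : ℕ) : t + 1 ≤ 2 ^ t := Nat.lt_two_pow_self (n := t)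

lemma two_pow_big (a : ℕ) : a + 8 ≤ 2 ^ (a + 3) := by
  induction a with
  | zero => norm_num
  | succ a ih =>
    have h : (2:ℕ) ^ (a + 1 + 3) = 2 * 2 ^ (a + 3) := by ring
    omega

lemma two_pow_big' (a : ℕ) (h : 1 ≤ a) : a + 12 ≤ 2 ^ (a + 3) := by
  have h1 : a + 1 ≤ 2 ^ a := two_pow_ge a
  have h2 : (2:ℕ) ^ (a + 3) = 8 * 2 ^ a := by ring
  have h3 : 8 * (a + 1) ≤ 8 * 2 ^ a := Nat.mul_le_mul_left 8 h1
  omega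

/- ## symbolic helper keys (kernel-safe: applied to huge closed terms) -/
lemma key_base4 (c : ℕ) (h : 16 ≤ c) : 65533 + 3 ≤ 8 + 2 ^ c - 1 := by
  have h2 : (65536:ℕ) ≤ 2 ^ c := le_trans (by norm_num) (pow2_mono h)
  omega

lemma key_three (w : ℕ) : 3 ≤ 2 + 2 ^ w := by
  have h : 1 ≤ 2 ^ w := Nat.one_le_two_pow
  omega

lemma key7 (w : ℕ) (h : 16 ≤ w) : 3 ≤ 0 + 2 ^ w - 8 := by
  have h2 : (65536:ℕ) ≤ 2 ^ w := le_trans (by norm_num) (pow2_mono h)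
  omega

/- ## C2 bounds -/
lemma C2_ge_self (t : ℕ) : t ≤ C2 t := by
  induction t with
  | zero => simp [C2]
  | succ t ih =>
    have h : 1 ≤ 2 ^ C2 t := Nat.one_le_two_pow
    rw [C2_succ]
    omega

lemma C2_ge_ack4 (k : ℕ) : ack 4 k + 3 ≤ C2 (k + 4) := by
  induction k with
  | zero =>
    have h2 : C2 (0+4) = 2059 := by
      rw [show (0:ℕ)+4 = 0+1+1+1+1 from rfl]
      rw [C2_succ, C2_succ, C2_succ, C2_succ]
      norm_num [C2]
    rw [h2, ack4_zero]
    norm_num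
  | succ k ih =>
    have e : k + 1 + 4 = (k + 4) + 1 := by omega
    rw [e, C2_succ]
    have h1 : (2:ℕ) ^ (ack 4 k + 3) ≤ 2 ^ C2 (k+4) := pow2_mono ih
    have h2 : ack 4 (k+1) + 3 = 2 ^ (ack 4 k + 3) := by rw [ack4_succ, ack3_add3]
    omega

/- ## C4 bounds -/
lemma C4_ge_ack5 (k : ℕ) : ack 5 k + 3 ≤ C4 (k + 2) := by
  induction k with
  | zero =>
    rw [C4_succ2 0, show (0:ℕ)+1 = 1 from rfl, C4_one, ack5_zero, C3_eq, C1_eq]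
    exact key_base4 (C2 (2 ^ 8)) (le_trans (by norm_num) (C2_ge_self (2 ^ 8)))
  | succ k ih =>
    rw [C4_succ2, show k+1+1 = k+2 from by omega, C3_eq, C1_eq]
    set a := C4 (k + 2) with ha
    have ha3 : ack 5 k + 3 ≤ a := ih
    have h4 : 4 ≤ 2 ^ a := le_trans (by norm_num) (pow2_mono (show 2 ≤ a by omega))
    have hbig : ack 5 k ≤ 2 ^ a - 4 := by
      have h := two_pow_big (a - 3)
      have e3 : a - 3 + 3 = a := by omega
      rw [e3] at h
      omega
    have hC2 : ack 5 (k+1) + 3 ≤ C2 (2 ^ a) := by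
      have h5 : ack 4 (2 ^ a - 4) + 3 ≤ C2 (2 ^ a - 4 + 4) := C2_ge_ack4 _
      have e4 : 2 ^ a - 4 + 4 = 2 ^ a := by omega
      rw [e4] at h5
      have h6 : ack 4 (ack 5 k) ≤ ack 4 (2 ^ a - 4) := ack_mono_right 4 hbig
      rw [ack5_succ]
      omega
    have h7 : C2 (2 ^ a) + 1 ≤ 2 ^ C2 (2 ^ a) := two_pow_ge _
    omega

lemma C4_ge_ack5' (s b : ℕ) (hb : b + 2 ≤ s) : ack 5 b + 3 ≤ C4 s := by
  have h5 : ack 5 (s - 2) + 3 ≤ C4 (s - 2 + 2) := C4_ge_ack5 _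
  have e : s - 2 + 2 = s := by omega
  rw [e] at h5
  have h6 : ack 5 b ≤ ack 5 (s - 2) := ack_mono_right 5 (by omega)
  omega

lemma C4_ge_self (t : ℕ) : t ≤ C4 t := by
  induction t with
  | zero => simp [C4]
  | succ t ih =>
    match t, ih with
    | 0, _ => rw [show (0:ℕ)+1 = 1 from rfl, C4_one]; omega
    | t+1, ih =>
      rw [show t+1+1 = t+2 from by omega, C4_succ2, C3_eq, C1_eq]
      have h1 : 1 ≤ C2 (2 ^ C4 (t+1)) := by
        have h := C2_ge_self (2 ^ C4 (t+1))
        have h' : (1:ℕ) ≤ 2 ^ C4 (t+1) := Nat.one_le_two_pow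
        omega
      have h2 : 2 ^ (1:ℕ) ≤ 2 ^ C2 (2 ^ C4 (t+1)) := pow2_mono h1
      norm_num at h2
      omega

/- ## C5 bounds -/
lemma C5_step_ge (v b : ℕ) (hb : ack 6 b + 3 ≤ C4 v) : ack 6 b + 12 ≤ v + 2 ^ C4 v := by
  have h1 : (2:ℕ) ^ (ack 6 b + 3) ≤ 2 ^ C4 v := pow2_mono hb
  have h2 := two_pow_big' (ack 6 b) (ack_pos 6 b)
  omega

lemma C5_ge_ack6 (k : ℕ) : ack 6 k + 12 ≤ C5 (k + 3) := by
  induction k with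
  | zero =>
    rw [show (0:ℕ)+3 = 1+2 from rfl, C5_succ2 1, show (1:ℕ)+1 = 2 from rfl, C3_eq]
    have h52 : C5 2 = 2 + 2 ^ C4 2 := by
      have h := C5_succ2 0
      rw [show (0:ℕ)+2 = 2 from rfl, show (0:ℕ)+1 = 1 from rfl, C5_one, C3_eq] at h
      exact h
    have h3 : 3 ≤ C5 2 := by rw [h52]; exact key_three (C4 2)
    have hC4C52 : ack 6 0 + 3 ≤ C4 (C5 2) := by
      rw [ack6_zero]
      exact C4_ge_ack5' (C5 2) 1 (le_trans (by norm_num) h3)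
    exact C5_step_ge (C5 2) 0 hC4C52
  | succ k ih =>
    rw [show k+1+3 = (k+2)+2 from by omega, C5_succ2, show k+2+1 = k+3 from by omega, C3_eq]
    have hC4 : ack 6 (k+1) + 3 ≤ C4 (C5 (k + 3)) := by
      rw [ack6_succ]
      exact C4_ge_ack5' (C5 (k+3)) (ack 6 k) (by omega)
    exact C5_step_ge (C5 (k+3)) (k+1) hC4

/- ## the step function of C7 -/
lemma Fc_ge (x : ℕ) (hx : 3 ≤ x) :
    ack 6 x + 12 ≤ C1 (C2 (C3 (C4 (C5 (C6 x))))) := by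
  rw [C1_eq, C3_eq, show C6 x = 2 ^ x from rfl]
  have h8 : x + 5 ≤ 2 ^ x := by
    have h := two_pow_big (x - 3)
    have e : x - 3 + 3 = x := by omega
    rw [e] at h; omega
  have h1 : ack 6 (2 ^ x - 3) + 12 ≤ C5 (2 ^ x) := by
    have h := C5_ge_ack6 (2 ^ x - 3)
    have e : 2 ^ x - 3 + 3 = 2 ^ x := by omega
    rw [e] at h; exact h
  have h2 : ack 6 x ≤ ack 6 (2 ^ x - 3) := ack_mono_right 6 (by omega)
  have h3 : C5 (2 ^ x) ≤ C4 (C5 (2 ^ x)) := C4_ge_self _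
  have h4 : C4 (C5 (2 ^ x)) + 1 ≤ 2 ^ C4 (C5 (2 ^ x)) := two_pow_ge _
  have h5 : 2 ^ C4 (C5 (2 ^ x)) ≤ C2 (2 ^ C4 (C5 (2 ^ x))) := C2_ge_self _
  have h6 : C2 (2 ^ C4 (C5 (2 ^ x))) + 1 ≤ 2 ^ C2 (2 ^ C4 (C5 (2 ^ x))) := two_pow_ge _
  omega

lemma C7_one : 3 ≤ C7 1 := by
  have h : C7 (0+1) = C7 0 + C1 (C2 (C3 (C4 (C5 (C6 (C7 0)))))) - 8 := C7_succ 0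
  rw [show (0:ℕ)+1 = 1 from rfl, show C7 0 = 0 from rfl,
      show C6 0 = 1 from rfl, C5_one, C3_eq, C1_eq] at h
  have h1 : ack 5 0 + 3 ≤ C4 (0 + 2) := C4_ge_ack5 0
  rw [ack5_zero, show (0:ℕ) + 2 = 2 from rfl] at h1
  have h4le : 4 ≤ C4 2 := le_trans (by norm_num) h1
  have hw : 16 ≤ C2 (2 ^ C4 2) :=
    le_trans (le_trans (by norm_num) (pow2_mono h4le)) (C2_ge_self (2 ^ C4 2))
  rw [h]
  exact key7 (C2 (2 ^ C4 2)) hw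

theorem stmt_4 : ∀ m : ℕ, C7 (m + 2) ≥ ack 7 m + 4 := by
  have step : ∀ n : ℕ, 3 ≤ C7 n → ack 6 (C7 n) + 4 ≤ C7 (n + 1) := by
    intro n hn
    have h := C7_succ n
    have hF := Fc_ge (C7 n) hn
    omega
  intro m
  induction m with
  | zero =>
    have h := step 1 C7_one
    rw [ack7_zero, show (0:ℕ)+2 = 1+1 from rfl]
    have h2 : ack 6 1 ≤ ack 6 (C7 1) := ack_mono_right 6 (le_trans (by norm_num) C7_one)
    exact le_trans (Nat.add_le_add_right h2 4) h
  | succ m ih =>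
    have h3 : 3 ≤ C7 (m + 2) := le_trans (by omega) ih
    have h := step (m + 2) h3
    rw [show m + 2 + 1 = m + 1 + 2 from by omega] at h
    have h2 : ack 6 (ack 7 m) ≤ ack 6 (C7 (m + 2)) := ack_mono_right 6 (le_trans (by omega) ih)
    rw [ack7_succ]
    exact le_trans (Nat.add_le_add_right h2 4) h
end

section
/- C₂(256) ≥ ack 4 252 + 3 (in the paper's notation, C̃₂∘C̃₃∘C̃₄ applied to 1 is C₂(256) ≥ F₄(252) + 3). -/
lemma my_key (n : ℕ) : ack 4 n + 3 ≤ C2 (n + 4) := by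
  induction n with
  | zero =>
    have h : ack 4 0 = 13 := by
      have h0 : ack 4 0 = ack 3 1 := ack_succ_zero 3
      rw [h0, ack_three]; norm_num
    rw [h]
    show (16:ℕ) ≤ C2 4
    simp [C2]
  | succ n ih =>
    have h1 : ack 4 (n + 1) + 3 = 2 ^ (ack 4 n + 3) := by
      have h0 : ack 4 (n + 1) = ack 3 (ack 4 n) := ack_succ_succ 3 n
      rw [h0, ack_three]
      have : (3:ℕ) ≤ 2 ^ (ack 4 n + 3) :=
        le_trans (by norm_num) (Nat.pow_le_pow_right (by norm_num) (Nat.le_add_left _ _))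
      omega
    have h2 : C2 (n + 5) = C2 (n + 4) + 2 ^ C2 (n + 4) := rfl
    have h3 : 2 ^ (ack 4 n + 3) ≤ 2 ^ C2 (n + 4) :=
      Nat.pow_le_pow_right (by norm_num) ih
    calc ack 4 (n + 1) + 3 = 2 ^ (ack 4 n + 3) := h1
      _ ≤ 2 ^ C2 (n + 4) := h3
      _ ≤ C2 (n + 5) := by rw [h2]; omega

theorem stmt_7 : C2 256 ≥ ack 4 252 + 3 := my_key 252
end

section
/- C₁(C₂(C₃(C₄(1)))) > ack 4 253; equivalently, 2^(C₂(256)) > ack 4 253 (the paper's computation C̃₁₅(1) > F₄(253)). -/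
def tw : ℕ → ℕ
  | 0 => 1
  | n + 1 => 2 ^ tw n

lemma tw_succ (n : ℕ) : tw (n + 1) = 2 ^ tw n := rfl

lemma ack4_eq (m : ℕ) : ack 4 m + 3 = tw (m + 3) := by
  induction m with
  | zero =>
    rw [show (4 : ℕ) = 3 + 1 from rfl, ack_succ_zero, ack_three]
    rfl
  | succ n ih =>
    have h3 : 3 ≤ 2 ^ (ack 4 n + 3) := by
      calc (3 : ℕ) ≤ 2 ^ 2 := by norm_num
        _ ≤ 2 ^ (ack 4 n + 3) := Nat.pow_le_pow_right (by norm_num) (by omega)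
    have h4 : (4 : ℕ) = 3 + 1 := rfl
    rw [h4, ack_succ_succ, ← h4, ack_three, Nat.sub_add_cancel h3, ih]
    rfl

lemma tw_le_C2 (m : ℕ) : tw m ≤ C2 (m + 1) := by
  induction m with
  | zero => decide
  | succ n ih =>
    show 2 ^ tw n ≤ C2 (n + 1) + 2 ^ C2 (n + 1)
    have := Nat.pow_le_pow_right (show 1 ≤ 2 by norm_num) ih
    omega

theorem stmt_8 : C1 (C2 (C3 (C4 1))) > ack 4 253 := by
  have e4 : C4 1 = 8 := rfl
  have e3 : C3 8 = 256 := by norm_num [C3]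
  have h1 : C1 (C2 (C3 (C4 1))) = 2 ^ C2 256 := by rw [e4, e3, C1]
  have h2 : tw 255 ≤ C2 256 := tw_le_C2 255
  have h3 : ack 4 253 + 3 = tw 256 := ack4_eq 253
  have h4 : tw 256 = 2 ^ tw 255 := tw_succ 255
  have h5 : 2 ^ tw 255 ≤ 2 ^ C2 256 := pow2_mono h2
  calc ack 4 253 < ack 4 253 + 3 := by omega
    _ = 2 ^ tw 255 := by rw [h3, h4]
    _ ≤ 2 ^ C2 256 := h5
    _ = C1 (C2 (C3 (C4 1))) := h1.symm
end

section
/- C₂(C₃(C₄(2))) > ack 4 (ack 4 254) (the paper's computation C̃₂₅(2) > F₄(F₄(254))). -/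
/-!
`F₄(m) + 3` is a tower of `m + 3` twos, and `C₂` grows at least as fast as the tower function.
Hence `F₄(F₄(m)) + 3` is a tower of height `2↑↑(m + 3)`, while already
`C₃(C₄(2)) = 2 ^ (2 ^ C₂(256) + 7)` exceeds `2↑↑257`.
-/

/-- `tower (n + 1) = 2↑↑n`, a tower of `n` twos. -/
def tower : ℕ → ℕ
  | 0 => 0
  | n + 1 => 2 ^ tower n

lemma tower_strictMono : StrictMono tower :=
  strictMono_nat_of_lt_succ fun n => (tower n).lt_two_pow_self

lemma tower_le_C2 (n : ℕ) : tower n ≤ C2 n := by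
  induction n with
  | zero => rfl
  | succ n ih =>
    calc tower (n + 1) = 2 ^ tower n := rfl
      _ ≤ 2 ^ C2 n := Nat.pow_le_pow_right two_pos ih
      _ ≤ C2 (n + 1) := Nat.le_add_left _ _

lemma ack_four_add_three (m : ℕ) : ack 4 m + 3 = tower (m + 4) := by
  induction m with
  | zero => rw [ack_succ_zero, ack_three]; rfl
  | succ m ih =>
    have hstep : ack 4 (m + 1) = 2 ^ (ack 4 m + 3) - 3 := by rw [ack_succ_succ, ack_three]
    have h8 : 8 ≤ 2 ^ (ack 4 m + 3) := by
      simpa using Nat.pow_le_pow_right two_pos (Nat.le_add_left 3 (ack 4 m))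
    rw [hstep, Nat.sub_add_cancel (by omega), ih]
    rfl

lemma ack_four_ack_four_add_three (m : ℕ) :
    ack 4 (ack 4 m) + 3 = tower (tower (m + 4) + 1) := by
  rw [ack_four_add_three, ← ack_four_add_three m]

lemma C4_two : C4 2 = 2 ^ C2 256 + 7 := by
  have hC4 : C4 (0 + 2) = C4 (0 + 1) + C1 (C2 (C3 (C4 (0 + 1)))) - 1 := C4.eq_3 0
  rw [Nat.zero_add, Nat.zero_add, show C4 1 = 8 from rfl, C1, C3,
    show (2 : ℕ) ^ 8 = 256 by norm_num] at hC4
  rw [hC4]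
  -- The arithmetic is done on an abstract `x`: any attempt to evaluate `2 ^ C2 256` never ends.
  exact (fun x => by omega : ∀ x : ℕ, 8 + x - 1 = x + 7) _

lemma tower_add_two_lt (n : ℕ) : tower (n + 2) < 2 ^ (2 ^ C2 n + 7) :=
  calc tower (n + 2) = 2 ^ 2 ^ tower n := rfl
    _ ≤ 2 ^ 2 ^ C2 n := Nat.pow_le_pow_right two_pos (Nat.pow_le_pow_right two_pos (tower_le_C2 n))
    _ < 2 ^ (2 ^ C2 n + 7) := Nat.pow_lt_pow_right one_lt_two (by omega)

lemma tower_lt_C3_C4_two : tower 258 < C3 (C4 2) := by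
  rw [C3, C4_two]
  exact tower_add_two_lt 256

theorem stmt_11 : C2 (C3 (C4 2)) > ack 4 (ack 4 254) :=
  calc ack 4 (ack 4 254) < ack 4 (ack 4 254) + 3 := Nat.lt_add_of_pos_right three_pos
    -- `254 + 4` stays unevaluated: unifying it with `258` makes Lean try to compute `ack 4 254`.
    _ = tower (tower (254 + 4) + 1) := ack_four_ack_four_add_three 254
    _ ≤ tower (C3 (C4 2)) := tower_strictMono.monotone (Nat.add_one_le_iff.mpr tower_lt_C3_C4_two)
    _ ≤ C2 (C3 (C4 2)) := tower_le_C2 _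
end
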